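/- Let L ≤ A_k be a subgroup such that closed balls of radius 1 (metric d(x,y)=‖x-y‖₁/2) around points of L are pairwise disjoint. Define an incidence structure on G = A_k / L: points and lines are elements of G, with p incident to l iff p - l ≡ eᵢ - e_{k+1} (mod L) for some i ∈ [k+1]. Then any two distinct points are incident with at most one common line. -/

import Mathlib

/-!
If `p₁ ≠ p₂` both lie on `l₁` and on `l₂`, with `pₘ - lₙ ≡ e_{iₘₙ} - e_{k+1}`, then
`p₁ - p₂ ≡ e_{i₁₁} - e_{i₂₁} ≡ e_{i₁₂} - e_{i₂₂}`. Both representatives lie in the unit ball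
around `0`, and the disjointness of the unit balls around `L` makes reduction modulo `L`
injective on such a ball, so `e_{i₁₁} - e_{i₂₁} = e_{i₁₂} - e_{i₂₂}` in `ℤ^{k+1}`. As
`i₁₁ ≠ i₂₁`, this forces `i₁₁ = i₁₂`, that is `p₁ - l₁ = p₁ - l₂`.
-/

/-- The lattice `Aₖ = {x ∈ ℤ^{k+1} : Σᵢ xᵢ = 0}`. -/
def latticeA (k : ℕ) : AddSubgroup (Fin (k + 1) → ℤ) :=
  AddMonoidHom.ker
    (AddMonoidHom.mk' (fun x => ∑ i, x i)
      (by intro a b; simp [Finset.sum_add_distrib]))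

/-- The element `eᵢ - eⱼ` of `Aₖ`. -/
def eij (k : ℕ) (i j : Fin (k + 1)) : latticeA k :=
  ⟨Pi.single i (1 : ℤ) - Pi.single j 1, by
    simp only [latticeA, AddMonoidHom.mem_ker, AddMonoidHom.mk'_apply,
      Pi.sub_apply]
    simp [Finset.sum_sub_distrib]⟩

/-- The incidence relation on `G = Aₖ / L`: point `p` and line `l` are
incident iff `p - l ≡ eᵢ - e_{k+1} (mod L)` for some `i`. -/
def Incid (k : ℕ) (L : AddSubgroup (latticeA k))
    (p l : latticeA k ⧸ L) : Prop :=
  ∃ i : Fin (k + 1), p - l = QuotientAddGroup.mk' L (eij k i (Fin.last k))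

/-- Twice the paper's metric `d(x, y) = ‖x - y‖₁ / 2`: its unit balls have radius `2` here. -/
def l1Dist {ι : Type*} [Fintype ι] (x y : ι → ℤ) : ℤ :=
  ∑ i, |x i - y i|

lemma l1Dist_sub_sub_right {ι : Type*} [Fintype ι] (x y w : ι → ℤ) :
    l1Dist (x - w) (y - w) = l1Dist x y := by
  simp only [l1Dist, Pi.sub_apply, sub_sub_sub_cancel_right]

lemma l1Dist_single_sub_single_zero_le {ι : Type*} [Fintype ι] [DecidableEq ι] (a b : ι) :
    l1Dist (Pi.single a 1 - Pi.single b 1) 0 ≤ 2 :=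
  calc ∑ i, |(Pi.single a 1 - Pi.single b 1 - 0 : ι → ℤ) i|
      ≤ ∑ i, (|(Pi.single a 1 : ι → ℤ) i| + |(Pi.single b 1 : ι → ℤ) i|) :=
        Finset.sum_le_sum fun i _ => by simpa using abs_sub _ _
    _ = 2 := by
        simp [Finset.sum_add_distrib, Pi.single_apply, apply_ite (|·|)]

lemma eq_of_single_sub_single_eq {ι : Type*} [DecidableEq ι] {a b c d : ι} (hab : a ≠ b)
    (h : (Pi.single a 1 - Pi.single b 1 : ι → ℤ) = Pi.single c 1 - Pi.single d 1) : a = c := by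
  have ha := congrFun h a
  simp only [Pi.sub_apply, Pi.single_apply, if_neg hab] at ha
  split_ifs at ha <;> simp_all

lemma eq_of_sub_mem_of_l1Dist_le {ι : Type*} [Fintype ι] {A : AddSubgroup (ι → ℤ)}
    {L : AddSubgroup A} {r : ℤ}
    (hdisj : ∀ x ∈ L, ∀ y ∈ L, x ≠ y → ∀ z : A,
      ¬(l1Dist (x : ι → ℤ) z ≤ r ∧ l1Dist (y : ι → ℤ) z ≤ r))
    {a b z : A} (hab : a - b ∈ L) (ha : l1Dist (a : ι → ℤ) z ≤ r)
    (hb : l1Dist (b : ι → ℤ) z ≤ r) : a = b := by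
  by_contra hne
  refine hdisj (a - b) hab 0 L.zero_mem (sub_ne_zero.mpr hne) (z - b) ⟨?_, ?_⟩
  · simpa only [AddSubgroup.coe_sub, l1Dist_sub_sub_right] using ha
  · simpa only [AddSubgroup.coe_sub, ZeroMemClass.coe_zero, ← sub_self (b : ι → ℤ),
      l1Dist_sub_sub_right] using hb

lemma eij_sub_eij (k : ℕ) (i i' j : Fin (k + 1)) : eij k i j - eij k i' j = eij k i i' := by
  ext
  simp [eij]

lemma sub_eq_mk_eij_of_sub_eq {k : ℕ} {L : AddSubgroup (latticeA k)} {p p' l : latticeA k ⧸ L}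
    {i i' j : Fin (k + 1)} (h : p - l = QuotientAddGroup.mk' L (eij k i j))
    (h' : p' - l = QuotientAddGroup.mk' L (eij k i' j)) :
    p - p' = QuotientAddGroup.mk' L (eij k i i') := by
  rw [← sub_sub_sub_cancel_right p p' l, h, h', ← map_sub, eij_sub_eij]

/-- If the radius-1 balls (i.e. `ℓ¹`-radius-2 balls) around points of a
subgroup `L ≤ Aₖ` are pairwise disjoint, then in the induced incidence
structure on `Aₖ / L` any two distinct points lie on at most one common
line. -/
theorem stmt_16 (k : ℕ) (L : AddSubgroup (latticeA k))
    (hdisj : ∀ x ∈ L, ∀ y ∈ L, x ≠ y → ∀ z : latticeA k,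
      ¬(∑ i, |(x : Fin (k + 1) → ℤ) i - (z : Fin (k + 1) → ℤ) i| ≤ 2 ∧
        ∑ i, |(y : Fin (k + 1) → ℤ) i - (z : Fin (k + 1) → ℤ) i| ≤ 2)) :
    ∀ p₁ p₂ : latticeA k ⧸ L, p₁ ≠ p₂ → ∀ l₁ l₂ : latticeA k ⧸ L,
      Incid k L p₁ l₁ → Incid k L p₂ l₁ → Incid k L p₁ l₂ → Incid k L p₂ l₂ →
      l₁ = l₂ := by
  rintro p₁ p₂ hp l₁ l₂ ⟨i₁, h₁⟩ ⟨j₁, h₂⟩ ⟨i₂, h₃⟩ ⟨j₂, h₄⟩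
  have hij : i₁ ≠ j₁ := by
    rintro rfl
    exact hp (sub_left_injective (h₁.trans h₂.symm))
  have hmk : QuotientAddGroup.mk' L (eij k i₁ j₁) = QuotientAddGroup.mk' L (eij k i₂ j₂) :=
    (sub_eq_mk_eij_of_sub_eq h₁ h₂).symm.trans (sub_eq_mk_eij_of_sub_eq h₃ h₄)
  have heq : eij k i₁ j₁ = eij k i₂ j₂ :=
    eq_of_sub_mem_of_l1Dist_le hdisj (z := 0) (QuotientAddGroup.eq_iff_sub_mem.mp hmk)
      (l1Dist_single_sub_single_zero_le i₁ j₁) (l1Dist_single_sub_single_zero_le i₂ j₂)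
  obtain rfl : i₁ = i₂ := eq_of_single_sub_single_eq hij (congrArg Subtype.val heq)
  exact sub_right_injective (h₁.trans h₃.symm)
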